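/- arXiv:math/0407053 — 6 statements merged into one kernel-verified Lean document; each statement's English description precedes it below -/
import Mathlib

section
/- There exists a ℂ-algebra homomorphism A_q(N) → A_q(N,2) sending x^i_j to Σ_s x^i_s·y^s_j for all i,j; equivalently, the entries of the matrix product XY (where X = (x^i_j) and Y = (y^i_j)) satisfy the defining relations of the reflection equation algebra A_q(N). -/
noncomputable section
open scoped BigOperators

namespace QREA

/-- The entry `R^{ik}_{jl}` of the R-matrix of quantum `SL_N`. -/
def Rc (q : ℂ) {N : ℕ} (i k j l : Fin N) : ℂ :=
  if i = j ∧ k = l ∧ i = k then q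
  else if i = j ∧ k = l then 1
  else if j < i ∧ i = l ∧ j = k then q - q⁻¹
  else 0

/-- The entry `R̂^{ik}_{jl} = R^{ki}_{jl}`. -/
def Rh (q : ℂ) {N : ℕ} (i k j l : Fin N) : ℂ := Rc q k i j l

/-- The free algebra on generators `x^i_j`. -/
abbrev F (N : ℕ) := FreeAlgebra ℂ (Fin N × Fin N)

/-- The generator `x^i_j` of the free algebra. -/
def g {N : ℕ} (i j : Fin N) : F N := FreeAlgebra.ι ℂ (i, j)

/-- The defining relations of the reflection equation algebra `A_q(N)`:
for all `i j k l`,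
`Σ_{s,t,a,b} R̂^{ib}_{st}·R̂^{sa}_{jl}·x^k_b·x^t_a = Σ_{s,t,a,b} R̂^{ik}_{sa}·R̂^{st}_{jb}·x^a_t·x^b_l`. -/
inductive Rel (q : ℂ) (N : ℕ) : F N → F N → Prop
  | rea (i j k l : Fin N) : Rel q N
      (∑ s : Fin N, ∑ t : Fin N, ∑ a : Fin N, ∑ b : Fin N,
        (Rh q i b s t * Rh q s a j l) • (g k b * g t a))
      (∑ s : Fin N, ∑ t : Fin N, ∑ a : Fin N, ∑ b : Fin N,
        (Rh q i k s a * Rh q s t j b) • (g a t * g b l))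

/-- The reflection equation algebra `A_q(N)`. -/
abbrev A (q : ℂ) (N : ℕ) := RingQuot (Rel q N)

/-- The generator `x^i_j` of `A_q(N)`. -/
def X (q : ℂ) {N : ℕ} (i j : Fin N) : A q N := RingQuot.mkAlgHom ℂ (Rel q N) (g i j)

end QREA

namespace QREA

/-- The R-matrix as an `N²×N²` matrix: the entry in row `(i,k)`, column `(j,l)` is `R^{ik}_{jl}`. -/
def RM (q : ℂ) (N : ℕ) : Matrix (Fin N × Fin N) (Fin N × Fin N) ℂ :=
  Matrix.of fun p r => Rc q p.1 p.2 r.1 r.2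

/-- The operation `A ↦ A^{t₂}`, `(A^{t₂})^{ik}_{jl} = A^{il}_{jk}`. -/
def t2 {N : ℕ} (M : Matrix (Fin N × Fin N) (Fin N × Fin N) ℂ) :
    Matrix (Fin N × Fin N) (Fin N × Fin N) ℂ :=
  Matrix.of fun p r => M (p.1, r.2) (r.1, p.2)

/-- The matrix `R̃`, defined by `R̃^{t₂} = (R^{t₂})⁻¹`. -/
def Rtil (q : ℂ) (N : ℕ) : Matrix (Fin N × Fin N) (Fin N × Fin N) ℂ :=
  t2 ((t2 (RM q N))⁻¹)

/-- The free algebra on `m` families of generators `x(k)^i_j`. -/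
abbrev Fm (N m : ℕ) := FreeAlgebra ℂ (Fin m × Fin N × Fin N)

/-- The generator `x(k)^i_j` of the free algebra. -/
def gm {N m : ℕ} (k : Fin m) (i j : Fin N) : Fm N m := FreeAlgebra.ι ℂ (k, i, j)

/-- The defining relations of `A_q(N,m)`: each family `x(u)` satisfies the reflection equation
relations, and each ordered pair `(x(u), x(v))` with `u < v` satisfies the cross relations
`x(v)^i_j·x(u)^k_l = Σ (R⁻¹)^{an}_{rc}·R^{sc}_{bl}·R^{id}_{am}·R̃^{bk}_{jd}·x(u)^m_n·x(v)^r_s`. -/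
inductive RelM (q : ℂ) (N m : ℕ) : Fm N m → Fm N m → Prop
  | rea (u : Fin m) (i j k l : Fin N) : RelM q N m
      (∑ s : Fin N, ∑ t : Fin N, ∑ a : Fin N, ∑ b : Fin N,
        (Rh q i b s t * Rh q s a j l) • (gm u k b * gm u t a))
      (∑ s : Fin N, ∑ t : Fin N, ∑ a : Fin N, ∑ b : Fin N,
        (Rh q i k s a * Rh q s t j b) • (gm u a t * gm u b l))
  | cross (u v : Fin m) (huv : u < v) (i j k l : Fin N) : RelM q N m
      (gm v i j * gm u k l)
      (∑ a : Fin N, ∑ b : Fin N, ∑ c : Fin N, ∑ d : Fin N, ∑ m' : Fin N, ∑ n : Fin N,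
        ∑ r : Fin N, ∑ s : Fin N,
        ((RM q N)⁻¹ (a, n) (r, c) * RM q N (s, c) (b, l) * RM q N (i, d) (a, m') *
            Rtil q N (b, k) (j, d)) • (gm u m' n * gm v r s))

/-- The algebra `A_q(N,m)`. -/
abbrev Am (q : ℂ) (N m : ℕ) := RingQuot (RelM q N m)

/-- The generator `x(k)^i_j` of `A_q(N,m)`. -/
def Xm (q : ℂ) {N m : ℕ} (k : Fin m) (i j : Fin N) : Am q N m :=
  RingQuot.mkAlgHom ℂ (RelM q N m) (gm k i j)

end QREA


/-!
Write `W₂ = 1 ⊗ W` and let `R̂` be the braid matrix. The reflection equation relations say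
`X₂ R̂ X₂ R̂ = R̂ X₂ R̂ X₂`, and after contracting with `R̃^{t₂} = (R^{t₂})⁻¹` the cross relations of
`A_q(N,2)` say `Y₂ R̂ X₂ = R̂ X₂ R̂⁻¹ Y₂ R̂`, where `R̂` is invertible by the Hecke relation
`R̂² = (q - q⁻¹) R̂ + 1`. Since `(XY)₂ = X₂ Y₂`, these two identities give the reflection equation for
`XY` by a short computation in the monoid of matrices.
-/

theorem reflection_mul {M : Type*} [Monoid M] {R R' X Y : M} (hRR' : R * R' = 1)
    (hR'R : R' * R = 1) (hX : X * R * X * R = R * X * R * X) (hY : Y * R * Y * R = R * Y * R * Y)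
    (hYX : Y * R * X = R * X * R' * Y * R) :
    X * Y * R * (X * Y) * R = R * (X * Y) * R * (X * Y) := by
  have lhs : X * Y * R * (X * Y) * R = X * R * X * (Y * R * Y) := calc
    _ = X * (Y * R * X) * (Y * R) := by simp only [mul_assoc]
    _ = X * R * X * R' * (Y * R * Y * R) := by rw [hYX]; simp only [mul_assoc]
    _ = X * R * X * (R' * R) * (Y * R * Y) := by rw [hY]; simp only [mul_assoc]
    _ = _ := by rw [hR'R, mul_one]
  have rhs : R * (X * Y) * R * (X * Y) = X * R * X * (Y * R * Y) := calc
    _ = R * X * (Y * R * X) * Y := by simp only [mul_assoc]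
    _ = R * X * R * X * R' * (Y * R * Y) := by rw [hYX]; simp only [mul_assoc]
    _ = X * R * X * (R * R') * (Y * R * Y) := by rw [← hX]; simp only [mul_assoc]
    _ = _ := by rw [hRR', mul_one]
  rw [lhs, rhs]

namespace Matrix

open scoped Kronecker

abbrev oneKron {ι B : Type*} [DecidableEq ι] [MulZeroOneClass B] (W : Matrix ι ι B) :
    Matrix (ι × ι) (ι × ι) B :=
  1 ⊗ₖ W

variable {ι K B : Type*} [Fintype ι] [Semiring B] [CommSemiring K] [Algebra K B]

lemma mul_map_mul_apply (A C : Matrix ι ι B) (M : Matrix ι ι K) (p r : ι) :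
    (A * M.map (algebraMap K B) * C) p r = ∑ x, ∑ y, M x y • (A p x * C y r) := by
  simp only [mul_apply, Finset.sum_mul, map_apply]
  rw [Finset.sum_comm]
  simp only [Algebra.smul_def, ← mul_assoc, Algebra.commutes]

variable (K) in
def prodCombination (X Y : Matrix ι ι B) : (ι × ι × ι × ι → K) →ₗ[K] B :=
  Fintype.linearCombination K fun x => X x.1 x.2.1 * Y x.2.2.1 x.2.2.2

variable [DecidableEq ι]

lemma mul_eq_prodCombination_single (X Y : Matrix ι ι B) (m n r s : ι) :
    X m n * Y r s = prodCombination K X Y (Pi.single (m, n, r, s) 1) := by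
  simp [prodCombination]

lemma oneKron_mul_apply (W : Matrix ι ι B) (M : Matrix (ι × ι) (ι × ι) B) (i k : ι)
    (r : ι × ι) : (oneKron W * M) (i, k) r = ∑ b, W k b * M (i, b) r := by
  simp [mul_apply, Fintype.sum_prod_type, kroneckerMap_apply, one_apply, ite_mul]

lemma mul_oneKron_apply (M : Matrix (ι × ι) (ι × ι) B) (W : Matrix ι ι B) (p : ι × ι)
    (j l : ι) : (M * oneKron W) p (j, l) = ∑ a, M p (j, a) * W a l := by
  simp [mul_apply, Fintype.sum_prod_type, kroneckerMap_apply, one_apply]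

lemma oneKron_mul_oneKron (W V : Matrix ι ι B) : oneKron W * oneKron V = oneKron (W * V) := by
  ext ⟨i, k⟩ ⟨j, l⟩
  rw [oneKron_mul_apply]
  simp [kroneckerMap_apply, one_apply, mul_apply]

lemma oneKron_mul_map_apply (W : Matrix ι ι B) (M : Matrix (ι × ι) (ι × ι) K) (i k : ι)
    (r : ι × ι) : (oneKron W * M.map (algebraMap K B)) (i, k) r = ∑ b, M (i, b) r • W k b := by
  simp [oneKron_mul_apply, Algebra.smul_def, Algebra.commutes]

lemma map_mul_oneKron_apply (M : Matrix (ι × ι) (ι × ι) K) (W : Matrix ι ι B) (p : ι × ι)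
    (j l : ι) : (M.map (algebraMap K B) * oneKron W) p (j, l) = ∑ a, M p (j, a) • W a l := by
  simp [mul_oneKron_apply, Algebra.smul_def]

end Matrix

namespace QREA

open Matrix

section RMatrix

variable (q : ℂ) (N : ℕ)

def Rhat : Matrix (Fin N × Fin N) (Fin N × Fin N) ℂ :=
  Matrix.of fun p r => Rh q p.1 p.2 r.1 r.2

@[simp]
lemma Rhat_apply (i k j l : Fin N) : Rhat q N (i, k) (j, l) = Rh q i k j l := rfl

variable {N}

lemma sum_sum_Rh_mul (i k : Fin N) (f : Fin N → Fin N → ℂ) :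
    ∑ a, ∑ b, Rh q i k a b * f a b
      = (if i = k then q else 1) * f k i + (if i < k then (q - q⁻¹) * f i k else 0) := by
  have h : ∀ a b : Fin N, Rh q i k a b * f a b =
      (if b = i then if a = k then (if i = k then q else 1) * f a b else 0 else 0)
      + (if b = k then if a = i then (if i < k then (q - q⁻¹) * f a b else 0) else 0 else 0) := by
    intro a b
    unfold Rh Rc
    split_ifs <;> first | ring1 | (exfalso; omega)
  simp only [h, Finset.sum_add_distrib, Finset.sum_ite_eq', Finset.mem_univ, if_true]

variable {q} (N)

theorem Rhat_mul_Rhat (hq : q ≠ 0) : Rhat q N * Rhat q N = (q - q⁻¹) • Rhat q N + 1 := by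
  ext ⟨i, k⟩ ⟨j, l⟩
  have hq2 : q * q = (q - q⁻¹) * q + 1 := by field_simp; ring
  rw [mul_apply, Fintype.sum_prod_type]
  simp only [Rhat_apply, Matrix.add_apply, Matrix.smul_apply, one_apply, smul_eq_mul,
    Prod.mk.injEq]
  rw [sum_sum_Rh_mul q i k (fun a b => Rh q a b j l)]
  unfold Rh Rc
  split_ifs <;> first | ring1 | (exfalso; omega) | linear_combination hq2

theorem Rhat_mul_Rhat_sub (hq : q ≠ 0) : Rhat q N * (Rhat q N - (q - q⁻¹) • 1) = 1 := by
  rw [mul_sub, Rhat_mul_Rhat N hq, Matrix.mul_smul, mul_one, add_sub_cancel_left]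

theorem isUnit_det_Rhat (hq : q ≠ 0) : IsUnit (Rhat q N).det :=
  isUnit_det_of_right_inverse (Rhat_mul_Rhat_sub N hq)

lemma RM_eq_submatrix_Rhat :
    RM q N = (Rhat q N).submatrix (Equiv.prodComm _ _) (Equiv.refl _) := rfl

lemma inv_RM_apply (a n r c : Fin N) : (RM q N)⁻¹ (a, n) (r, c) = (Rhat q N)⁻¹ (a, n) (c, r) := by
  rw [RM_eq_submatrix_Rhat, inv_submatrix_equiv]
  rfl

/-- In the lexicographic order `R^{t₂}` is lower triangular, with diagonal entries `q` or `1`. -/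
theorem isUnit_det_t2_RM (hq : q ≠ 0) : IsUnit (t2 (RM q N)).det := by
  rw [← det_submatrix_equiv_self toLex.symm, det_of_isLowerTriangular]
  · refine IsUnit.mk0 _ (Finset.prod_ne_zero_iff.2 fun p _ => ?_)
    simp only [submatrix_apply, t2, RM, of_apply, Rc]
    split_ifs <;> simp_all
  · intro p r hpr
    obtain ⟨⟨i, k⟩, rfl⟩ := toLex.surjective p
    obtain ⟨⟨j, l⟩, rfl⟩ := toLex.surjective r
    rw [OrderDual.toDual_lt_toDual, Prod.Lex.toLex_lt_toLex] at hpr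
    simp only [submatrix_apply, Equiv.symm_apply_apply, t2, RM, of_apply, Rc]
    split_ifs <;> first | rfl | (exfalso; grind)

/-- `Rh q i b j t` is the entry `(R^{t₂})^{bt}_{ji}`, and `R̃^{t₂}` is the inverse of `R^{t₂}`. -/
theorem sum_Rh_mul_sum_Rtil (hq : q ≠ 0) (i j : Fin N) (C : Fin N → Fin N → Fin N → Fin N → ℂ) :
    ∑ t, ∑ b, ∑ a, ∑ b', ∑ c, ∑ d, Rh q i b j t * (C a b' c d * Rtil q N (b', t) (b, d))
      = ∑ a, ∑ c, C a j c i := by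
  have contract : ∀ b' d, ∑ t, ∑ b, Rtil q N (b', t) (b, d) * Rh q i b j t
      = if b' = j ∧ d = i then 1 else 0 := by
    intro b' d
    have h := congrFun (congrFun (nonsing_inv_mul _ (isUnit_det_t2_RM N hq)) (b', d)) (j, i)
    rw [mul_apply, Fintype.sum_prod_type, Finset.sum_comm, one_apply] at h
    simp only [Prod.mk.injEq] at h
    exact h
  calc _ = ∑ p : Fin N × Fin N, ∑ x : Fin N × Fin N × Fin N × Fin N,
        C x.1 x.2.1 x.2.2.1 x.2.2.2 * (Rtil q N (x.2.1, p.1) (p.2, x.2.2.2) * Rh q i p.2 j p.1) := by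
        simp only [Fintype.sum_prod_type, mul_comm, mul_left_comm]
    _ = ∑ a, ∑ b', ∑ c, ∑ d, C a b' c d * ∑ t, ∑ b, Rtil q N (b', t) (b, d) * Rh q i b j t := by
        rw [Finset.sum_comm]
        simp only [Fintype.sum_prod_type, Finset.mul_sum]
    _ = _ := by
        simp only [contract, mul_ite, mul_one, mul_zero, ite_and, Finset.sum_ite_irrel,
          Finset.sum_const_zero, Finset.sum_ite_eq', Finset.mem_univ, if_true]

end RMatrix

section Relations

variable {q : ℂ} {N : ℕ} {B : Type*} [Semiring B] [Algebra ℂ B]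

local notation "R̂" => Matrix.map (Rhat q N) (algebraMap ℂ B)
local notation "R̂⁻¹" => Matrix.map (Rhat q N)⁻¹ (algebraMap ℂ B)

variable (q) in
def IsReflection (W : Matrix (Fin N) (Fin N) B) : Prop :=
  ∀ i j k l : Fin N,
    ∑ s, ∑ t, ∑ a, ∑ b, (Rh q i b s t * Rh q s a j l) • (W k b * W t a)
      = ∑ s, ∑ t, ∑ a, ∑ b, (Rh q i k s a * Rh q s t j b) • (W a t * W b l)

variable (q) in
def CrossRelations (X Y : Matrix (Fin N) (Fin N) B) : Prop :=
  ∀ i j k l : Fin N, Y i j * X k l =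
    ∑ a : Fin N, ∑ b : Fin N, ∑ c : Fin N, ∑ d : Fin N, ∑ m : Fin N, ∑ n : Fin N,
      ∑ r : Fin N, ∑ s : Fin N,
      ((RM q N)⁻¹ (a, n) (r, c) * RM q N (s, c) (b, l) * RM q N (i, d) (a, m) *
          Rtil q N (b, k) (j, d)) • (X m n * Y r s)

theorem isReflection_iff (W : Matrix (Fin N) (Fin N) B) :
    IsReflection q W ↔
      oneKron W * R̂ * oneKron W * R̂ = R̂ * oneKron W * R̂ * oneKron W := by
  have lhs : ∀ i k j l, (oneKron W * R̂ * oneKron W * R̂) (i, k) (j, l)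
      = ∑ s, ∑ t, ∑ a, ∑ b, (Rh q i b s t * Rh q s a j l) • (W k b * W t a) := by
    intro i k j l
    rw [mul_assoc, mul_apply, Fintype.sum_prod_type]
    simp only [oneKron_mul_map_apply, Finset.sum_mul, Finset.mul_sum, smul_mul_smul_comm,
      Rhat_apply]
  have rhs : ∀ i k j l, (R̂ * oneKron W * R̂ * oneKron W) (i, k) (j, l)
      = ∑ s, ∑ t, ∑ a, ∑ b, (Rh q i k s a * Rh q s t j b) • (W a t * W b l) := by
    intro i k j l
    rw [mul_assoc, mul_apply, Fintype.sum_prod_type]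
    simp only [map_mul_oneKron_apply, Finset.sum_mul, Finset.mul_sum, smul_mul_smul_comm,
      Rhat_apply]
    exact Finset.sum_congr rfl fun s _ => Finset.sum_congr rfl fun t _ => Finset.sum_comm
  constructor
  · intro h
    ext ⟨i, k⟩ ⟨j, l⟩
    rw [lhs, rhs]
    exact h i j k l
  · intro h i j k l
    rw [← lhs, ← rhs, h]

/-- Both sides are linear combinations of the products `X m n * Y r s`; we compare their
coefficient arrays. -/
theorem oneKron_mul_Rhat_mul_oneKron (hq : q ≠ 0) {X Y : Matrix (Fin N) (Fin N) B}
    (hXY : CrossRelations q X Y) :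
    oneKron Y * R̂ * oneKron X = R̂ * oneKron X * R̂⁻¹ * oneKron Y * R̂ := by
  unfold CrossRelations at hXY
  ext ⟨i, k⟩ ⟨j, l⟩
  rw [mul_oneKron_apply, mul_assoc _ (oneKron Y), mul_map_mul_apply]
  simp only [Fintype.sum_prod_type, oneKron_mul_map_apply, map_mul_oneKron_apply,
    Finset.sum_mul, Finset.mul_sum, smul_mul_assoc, mul_smul_comm, smul_smul, hXY,
    Finset.smul_sum]
  simp only [mul_eq_prodCombination_single (K := ℂ) X Y]
  simp only [← LinearMap.map_smul, ← map_sum]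
  refine congrArg _ (funext fun ⟨m, n, r, s⟩ => ?_)
  simp only [Finset.sum_apply, Pi.smul_apply, smul_eq_mul, Pi.single_apply, Prod.mk.injEq,
    mul_ite, mul_one, mul_zero, ite_and, Finset.sum_ite_irrel, Finset.sum_const_zero,
    Finset.sum_ite_eq, Finset.mem_univ, if_true]
  refine (sum_Rh_mul_sum_Rtil N hq i j _).trans ?_
  simp only [inv_RM_apply]
  rfl

theorem IsReflection.mul (hq : q ≠ 0) {X Y : Matrix (Fin N) (Fin N) B} (hX : IsReflection q X)
    (hY : IsReflection q Y) (hXY : CrossRelations q X Y) : IsReflection q (X * Y) := by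
  have hR := isUnit_det_Rhat N hq
  rw [isReflection_iff] at hX hY ⊢
  rw [← oneKron_mul_oneKron]
  refine reflection_mul ?_ ?_ hX hY (oneKron_mul_Rhat_mul_oneKron hq hXY)
  · rw [← Matrix.map_mul, mul_nonsing_inv _ hR, Matrix.map_one _ (map_zero _) (map_one _)]
  · rw [← Matrix.map_mul, nonsing_inv_mul _ hR, Matrix.map_one _ (map_zero _) (map_one _)]

end Relations

section Algebras

variable {q : ℂ} {N : ℕ}

@[simp]
lemma mkAlgHom_gm {m : ℕ} (u : Fin m) (i j : Fin N) :
    RingQuot.mkAlgHom ℂ (RelM q N m) (gm u i j) = Xm q u i j := rfl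

lemma isReflection_Xm {m : ℕ} (u : Fin m) : IsReflection q (Matrix.of (Xm q (N := N) u)) := by
  intro i j k l
  simpa only [map_sum, map_smul, map_mul, mkAlgHom_gm, of_apply] using
    RingQuot.mkAlgHom_rel ℂ (RelM.rea (q := q) (N := N) (m := m) u i j k l)

lemma crossRelations_Xm {m : ℕ} {u v : Fin m} (huv : u < v) :
    CrossRelations q (Matrix.of (Xm q (N := N) u)) (Matrix.of (Xm q v)) := by
  intro i j k l
  simpa only [map_sum, map_smul, map_mul, mkAlgHom_gm, of_apply] using
    RingQuot.mkAlgHom_rel ℂ (RelM.cross (q := q) u v huv i j k l)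

theorem exists_algHom_of_isReflection {B : Type*} [Semiring B] [Algebra ℂ B]
    {W : Matrix (Fin N) (Fin N) B} (hW : IsReflection q W) :
    ∃ φ : A q N →ₐ[ℂ] B, ∀ i j, φ (X q i j) = W i j := by
  refine ⟨RingQuot.liftAlgHom ℂ ⟨FreeAlgebra.lift ℂ fun p => W p.1 p.2, ?_⟩, fun i j => ?_⟩
  · rintro _ _ ⟨i, j, k, l⟩
    simpa [g] using hW i j k l
  · simp [X, g]

end Algebras

end QREA

theorem exists_algHom_rea_to_rea_two_general (q : ℂ) (hq : q ≠ 0) (N : ℕ) :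
    ∃ φ : QREA.A q N →ₐ[ℂ] QREA.Am q N 2, ∀ i j : Fin N,
      φ (QREA.X q i j) = ∑ s : Fin N, QREA.Xm q (0 : Fin 2) i s * QREA.Xm q (1 : Fin 2) s j := by
  open QREA in
  obtain ⟨φ, hφ⟩ := exists_algHom_of_isReflection <|
    (isReflection_Xm (N := N) 0).mul hq (isReflection_Xm 1)
      (crossRelations_Xm (by decide : (0 : Fin 2) < 1))
  exact ⟨φ, fun i j => (hφ i j).trans (Matrix.mul_apply ..)⟩

/-- there is a ℂ-algebra homomorphism `A_q(N) → A_q(N,2)` sending `x^i_j` to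
`Σ_s x^i_s·y^s_j`, i.e. the entries of the matrix `XY` satisfy the reflection equation
relations. -/
theorem exists_algHom_rea_to_rea_two (q : ℂ) (hq : q ≠ 0) (N : ℕ) (hN : 2 ≤ N) :
    ∃ φ : QREA.A q N →ₐ[ℂ] QREA.Am q N 2, ∀ i j : Fin N,
      φ (QREA.X q i j) = ∑ s : Fin N, QREA.Xm q (0 : Fin 2) i s * QREA.Xm q (1 : Fin 2) s j :=
  exists_algHom_rea_to_rea_two_general q hq N
end
end

section
/- The quantum Cayley–Hamilton identity holds for 2×2 braided matrices: in the matrix algebra M_2(A_q(2)), with X = (xij), one has X² − q^{-1}·Tr_q(X)·X + (q^{-2}·x22·x11 − x12·x21)·I = 0, where I is the identity matrix. -/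
noncomputable section
open scoped BigOperators

namespace QTR

/-- The free algebra on `m` families of 2×2 generators; `(k, i, j)` stands for the generator
`x(k+1)` with row index `i+1` and column index `j+1` (so e.g. `(k,0,1)` is `x(k+1)12`). -/
abbrev F (m : ℕ) := FreeAlgebra ℂ (Fin m × Fin 2 × Fin 2)

/-- The generator `x(k)_{i+1,j+1}` of the free algebra. -/
def g {m : ℕ} (k : Fin m) (i j : Fin 2) : F m := FreeAlgebra.ι ℂ (k, i, j)

/-- The defining relations of `A_q(2,m)`: each family satisfies the reflection equation algebra
relations of `A_q(2)`, and each ordered pair of families `(x, y) = (x(k), x(l))` with `k < l`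
satisfies the sixteen cross relations. -/
inductive Rel (q : ℂ) (m : ℕ) : F m → F m → Prop
  | base1 (k : Fin m) : Rel q m (g k 1 1 * g k 0 1) (q ^ 2 • (g k 0 1 * g k 1 1))
  | base2 (k : Fin m) : Rel q m (g k 0 0 * g k 0 1)
      (g k 0 1 * g k 0 0 + (q⁻¹ ^ 2 - 1) • (g k 0 1 * g k 1 1))
  | base3 (k : Fin m) : Rel q m (g k 0 0 * g k 1 1) (g k 1 1 * g k 0 0)
  | base4 (k : Fin m) : Rel q m (g k 1 0 * g k 0 1)
      (g k 0 1 * g k 1 0 + (q⁻¹ ^ 2 - 1) • (g k 1 1 * (g k 1 1 - g k 0 0)))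
  | base5 (k : Fin m) : Rel q m (g k 1 0 * g k 1 1) (q ^ 2 • (g k 1 1 * g k 1 0))
  | base6 (k : Fin m) : Rel q m (g k 1 0 * g k 0 0)
      (g k 0 0 * g k 1 0 + (q⁻¹ ^ 2 - 1) • (g k 1 1 * g k 1 0))
  | cross1 {k l : Fin m} (h : k < l) : Rel q m (g l 0 0 * g k 0 0)
      (g k 0 0 * g l 0 0 + (q⁻¹ ^ 4 - q⁻¹ ^ 2) • (g k 1 0 * g l 0 1))
  | cross2 {k l : Fin m} (h : k < l) : Rel q m (g l 0 1 * g k 0 0) (g k 0 0 * g l 0 1)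
  | cross3 {k l : Fin m} (h : k < l) : Rel q m (g l 0 0 * g k 0 1)
      (g k 0 1 * g l 0 0 + (1 - q⁻¹ ^ 2) • (g k 0 0 * g l 0 1)
        + (q⁻¹ ^ 2 - 1) • (g k 1 1 * g l 0 1))
  | cross4 {k l : Fin m} (h : k < l) : Rel q m (g l 0 1 * g k 0 1) (q ^ 2 • (g k 0 1 * g l 0 1))
  | cross5 {k l : Fin m} (h : k < l) : Rel q m (g l 1 0 * g k 0 0)
      (g k 0 0 * g l 1 0 + (q⁻¹ ^ 2 - 1) • (g k 1 0 * g l 1 1)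
        + (1 - q⁻¹ ^ 2) • (g k 1 0 * g l 0 0))
  | cross6 {k l : Fin m} (h : k < l) : Rel q m (g l 1 1 * g k 0 0)
      (g k 0 0 * g l 1 1 + (1 - q⁻¹ ^ 2) • (g k 1 0 * g l 0 1))
  | cross7 {k l : Fin m} (h : k < l) : Rel q m (g l 1 0 * g k 0 1)
      (q⁻¹ ^ 2 • (g k 0 1 * g l 1 0) + (q⁻¹ ^ 2 - 1) • (g k 0 0 * g l 0 0)
        + (1 - q⁻¹ ^ 2) • (g k 0 0 * g l 1 1) + (1 - q⁻¹ ^ 2) • (g k 1 1 * g l 0 0)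
        + (q⁻¹ ^ 2 - 1) • (g k 1 1 * g l 1 1)
        + (q⁻¹ ^ 4 - q⁻¹ ^ 2 - 1 + q ^ 2) • (g k 1 0 * g l 0 1))
  | cross8 {k l : Fin m} (h : k < l) : Rel q m (g l 1 1 * g k 0 1)
      (g k 0 1 * g l 1 1 + (1 - q ^ 2) • (g k 0 0 * g l 0 1) + (q ^ 2 - 1) • (g k 1 1 * g l 0 1))
  | cross9 {k l : Fin m} (h : k < l) : Rel q m (g l 0 0 * g k 1 0) (g k 1 0 * g l 0 0)
  | cross10 {k l : Fin m} (h : k < l) : Rel q m (g l 0 1 * g k 1 0)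
      (q⁻¹ ^ 2 • (g k 1 0 * g l 0 1))
  | cross11 {k l : Fin m} (h : k < l) : Rel q m (g l 0 0 * g k 1 1)
      (g k 1 1 * g l 0 0 + (1 - q⁻¹ ^ 2) • (g k 1 0 * g l 0 1))
  | cross12 {k l : Fin m} (h : k < l) : Rel q m (g l 0 1 * g k 1 1) (g k 1 1 * g l 0 1)
  | cross13 {k l : Fin m} (h : k < l) : Rel q m (g l 1 0 * g k 1 0) (q ^ 2 • (g k 1 0 * g l 1 0))
  | cross14 {k l : Fin m} (h : k < l) : Rel q m (g l 1 1 * g k 1 0) (g k 1 0 * g l 1 1)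
  | cross15 {k l : Fin m} (h : k < l) : Rel q m (g l 1 0 * g k 1 1)
      (g k 1 1 * g l 1 0 + (q ^ 2 - 1) • (g k 1 0 * g l 1 1) + (1 - q ^ 2) • (g k 1 0 * g l 0 0))
  | cross16 {k l : Fin m} (h : k < l) : Rel q m (g l 1 1 * g k 1 1)
      (g k 1 1 * g l 1 1 + (1 - q ^ 2) • (g k 1 0 * g l 0 1))

/-- The algebra `A_q(2,m)`. -/
abbrev A (q : ℂ) (m : ℕ) := RingQuot (Rel q m)

/-- The generator `x(k)_{i+1,j+1}` of `A_q(2,m)`. -/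
def X (q : ℂ) {m : ℕ} (k : Fin m) (i j : Fin 2) : A q m :=
  RingQuot.mkAlgHom ℂ (Rel q m) (g k i j)

/-- The matrix `X(k) = (x(k)^i_j)` over `A_q(2,m)`. -/
def XM (q : ℂ) {m : ℕ} (k : Fin m) : Matrix (Fin 2) (Fin 2) (A q m) :=
  Matrix.of fun i j => X q k i j

/-- The quantum trace `Tr_q(M) = q·m11 + q⁻¹·m22` of a 2×2 matrix over a ℂ-algebra. -/
def trq {R : Type*} [Ring R] [Algebra ℂ R] (q : ℂ) (M : Matrix (Fin 2) (Fin 2) R) : R :=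
  q • M 0 0 + q⁻¹ • M 1 1

end QTR

/-- the quantum Cayley–Hamilton identity
`X² − q⁻¹·Tr_q(X)·X + (q⁻²·x22·x11 − x12·x21)·I = 0` holds in `M_2(A_q(2))`. -/
theorem quantum_cayley_hamilton (q : ℂ) (hq : q ≠ 0) :
    QTR.XM q (0 : Fin 1) * QTR.XM q 0 - (q⁻¹ • QTR.trq q (QTR.XM q (0 : Fin 1))) • QTR.XM q 0
      + (q⁻¹ ^ 2 • (QTR.X q (0 : Fin 1) 1 1 * QTR.X q 0 0 0) - QTR.X q 0 0 1 * QTR.X q 0 1 0) •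
          (1 : Matrix (Fin 2) (Fin 2) (QTR.A q 1)) = 0 := by
  classical
  set a := QTR.X q (0 : Fin 1) 0 0 with ha
  set b := QTR.X q (0 : Fin 1) 0 1 with hb
  set c := QTR.X q (0 : Fin 1) 1 0 with hc
  set d := QTR.X q (0 : Fin 1) 1 1 with hd
  have h1 : d * b = q ^ 2 • (b * d) := by
    have := RingQuot.mkAlgHom_rel ℂ (QTR.Rel.base1 (q := q) (m := 1) 0)
    simpa [map_mul, map_smul, QTR.X, ha, hb, hd] using this
  have h3 : a * d = d * a := by
    have := RingQuot.mkAlgHom_rel ℂ (QTR.Rel.base3 (q := q) (m := 1) 0)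
    simpa [map_mul, map_smul, QTR.X, ha, hd] using this
  have h4 : c * b = b * c + (q⁻¹ ^ 2 - 1) • (d * (d - a)) := by
    have := RingQuot.mkAlgHom_rel ℂ (QTR.Rel.base4 (q := q) (m := 1) 0)
    simpa [map_mul, map_add, map_smul, map_sub, QTR.X, ha, hb, hc, hd] using this
  have h6 : c * a = a * c + (q⁻¹ ^ 2 - 1) • (d * c) := by
    have := RingQuot.mkAlgHom_rel ℂ (QTR.Rel.base6 (q := q) (m := 1) 0)
    simpa [map_mul, map_add, map_smul, QTR.X, ha, hc, hd] using this
  have e1 : ∀ x : QTR.A q 1, q⁻¹ • q • x = x := fun x => by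
    rw [smul_smul, inv_mul_cancel₀ hq, one_smul]
  have e2 : ∀ x : QTR.A q 1, q⁻¹ • q⁻¹ • x = q⁻¹ ^ 2 • x := fun x => by
    rw [smul_smul, ← sq]
  have e3 : (q⁻¹ : ℂ) ^ 2 * q ^ 2 = 1 := by field_simp
  ext i j
  fin_cases i <;> fin_cases j <;>
    simp only [Matrix.add_apply, Matrix.sub_apply, Matrix.mul_apply, Matrix.smul_apply,
      Matrix.one_apply, Fin.sum_univ_two, QTR.XM, QTR.trq, Matrix.of_apply, Matrix.zero_apply,
      Fin.mk_zero, Fin.mk_one, reduceIte, Fin.zero_eq_one_iff, Fin.one_eq_zero_iff, Nat.succ_ne_self, ne_eq,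
      smul_eq_mul, ← ha, ← hb, ← hc, ← hd, smul_mul_assoc, mul_smul_comm, add_mul, smul_add,
      mul_one, mul_zero, smul_zero, mul_sub, smul_sub, sub_mul, zero_mul]
  · rw [e1, e2]; abel
  · rw [e1, e2, h1, smul_smul, e3, one_smul]; abel
  · rw [h6, e1, e2]; module
  · rw [h4, h3, e1, e2, mul_sub, smul_sub]; module
end
end

section
/- The bilinear quantum Cayley–Hamilton identity holds: in M_2(A_q(2,2)), with X = (xij) and Y = (yij), one has XY + q²·YX − q·Tr_q(X)·Y − q·Tr_q(Y)·X + (Tr_q(X)·Tr_q(Y) − q^{-1}·Tr_q(XY))·I = 0. -/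
noncomputable section
open scoped BigOperators

namespace QTR
variable (q : ℂ)

lemma h01 : (0 : Fin 2) < 1 := by decide

lemma c1 : X q (1 : Fin 2) 0 0 * X q (0 : Fin 2) 0 0 = X q (0 : Fin 2) 0 0 * X q (1 : Fin 2) 0 0 + (q⁻¹ ^ 4 - q⁻¹ ^ 2) • (X q (0 : Fin 2) 1 0 * X q (1 : Fin 2) 0 1) := by
  have := RingQuot.mkAlgHom_rel (S := ℂ) (Rel.cross1 (q:=q) (m:=2) h01)
  simpa [X, g, map_mul, map_add, map_smul] using this

lemma c2 : X q (1 : Fin 2) 0 1 * X q (0 : Fin 2) 0 0 = X q (0 : Fin 2) 0 0 * X q (1 : Fin 2) 0 1 := by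
  have := RingQuot.mkAlgHom_rel (S := ℂ) (Rel.cross2 (q:=q) (m:=2) h01)
  simpa [X, g, map_mul, map_add, map_smul] using this

lemma c3 : X q (1 : Fin 2) 0 0 * X q (0 : Fin 2) 0 1 = X q (0 : Fin 2) 0 1 * X q (1 : Fin 2) 0 0 + (1 - q⁻¹ ^ 2) • (X q (0 : Fin 2) 0 0 * X q (1 : Fin 2) 0 1) + (q⁻¹ ^ 2 - 1) • (X q (0 : Fin 2) 1 1 * X q (1 : Fin 2) 0 1) := by
  have := RingQuot.mkAlgHom_rel (S := ℂ) (Rel.cross3 (q:=q) (m:=2) h01)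
  simpa [X, g, map_mul, map_add, map_smul] using this

lemma c4 : X q (1 : Fin 2) 0 1 * X q (0 : Fin 2) 0 1 = q ^ 2 • (X q (0 : Fin 2) 0 1 * X q (1 : Fin 2) 0 1) := by
  have := RingQuot.mkAlgHom_rel (S := ℂ) (Rel.cross4 (q:=q) (m:=2) h01)
  simpa [X, g, map_mul, map_add, map_smul] using this

lemma c5 : X q (1 : Fin 2) 1 0 * X q (0 : Fin 2) 0 0 = X q (0 : Fin 2) 0 0 * X q (1 : Fin 2) 1 0 + (q⁻¹ ^ 2 - 1) • (X q (0 : Fin 2) 1 0 * X q (1 : Fin 2) 1 1) + (1 - q⁻¹ ^ 2) • (X q (0 : Fin 2) 1 0 * X q (1 : Fin 2) 0 0) := by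
  have := RingQuot.mkAlgHom_rel (S := ℂ) (Rel.cross5 (q:=q) (m:=2) h01)
  simpa [X, g, map_mul, map_add, map_smul] using this

lemma c6 : X q (1 : Fin 2) 1 1 * X q (0 : Fin 2) 0 0 = X q (0 : Fin 2) 0 0 * X q (1 : Fin 2) 1 1 + (1 - q⁻¹ ^ 2) • (X q (0 : Fin 2) 1 0 * X q (1 : Fin 2) 0 1) := by
  have := RingQuot.mkAlgHom_rel (S := ℂ) (Rel.cross6 (q:=q) (m:=2) h01)
  simpa [X, g, map_mul, map_add, map_smul] using this

lemma c7 : X q (1 : Fin 2) 1 0 * X q (0 : Fin 2) 0 1 = q⁻¹ ^ 2 • (X q (0 : Fin 2) 0 1 * X q (1 : Fin 2) 1 0) + (q⁻¹ ^ 2 - 1) • (X q (0 : Fin 2) 0 0 * X q (1 : Fin 2) 0 0) + (1 - q⁻¹ ^ 2) • (X q (0 : Fin 2) 0 0 * X q (1 : Fin 2) 1 1) + (1 - q⁻¹ ^ 2) • (X q (0 : Fin 2) 1 1 * X q (1 : Fin 2) 0 0) + (q⁻¹ ^ 2 - 1) • (X q (0 : Fin 2) 1 1 * X q (1 : Fin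 2) 1 1) + (q⁻¹ ^ 4 - q⁻¹ ^ 2 - 1 + q ^ 2) • (X q (0 : Fin 2) 1 0 * X q (1 : Fin 2) 0 1) := by
  have := RingQuot.mkAlgHom_rel (S := ℂ) (Rel.cross7 (q:=q) (m:=2) h01)
  simpa [X, g, map_mul, map_add, map_smul] using this

lemma c8 : X q (1 : Fin 2) 1 1 * X q (0 : Fin 2) 0 1 = X q (0 : Fin 2) 0 1 * X q (1 : Fin 2) 1 1 + (1 - q ^ 2) • (X q (0 : Fin 2) 0 0 * X q (1 : Fin 2) 0 1) + (q ^ 2 - 1) • (X q (0 : Fin 2) 1 1 * X q (1 : Fin 2) 0 1) := by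
  have := RingQuot.mkAlgHom_rel (S := ℂ) (Rel.cross8 (q:=q) (m:=2) h01)
  simpa [X, g, map_mul, map_add, map_smul] using this

lemma c9 : X q (1 : Fin 2) 0 0 * X q (0 : Fin 2) 1 0 = X q (0 : Fin 2) 1 0 * X q (1 : Fin 2) 0 0 := by
  have := RingQuot.mkAlgHom_rel (S := ℂ) (Rel.cross9 (q:=q) (m:=2) h01)
  simpa [X, g, map_mul, map_add, map_smul] using this

lemma c10 : X q (1 : Fin 2) 0 1 * X q (0 : Fin 2) 1 0 = q⁻¹ ^ 2 • (X q (0 : Fin 2) 1 0 * X q (1 : Fin 2) 0 1) := by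
  have := RingQuot.mkAlgHom_rel (S := ℂ) (Rel.cross10 (q:=q) (m:=2) h01)
  simpa [X, g, map_mul, map_add, map_smul] using this

lemma c11 : X q (1 : Fin 2) 0 0 * X q (0 : Fin 2) 1 1 = X q (0 : Fin 2) 1 1 * X q (1 : Fin 2) 0 0 + (1 - q⁻¹ ^ 2) • (X q (0 : Fin 2) 1 0 * X q (1 : Fin 2) 0 1) := by
  have := RingQuot.mkAlgHom_rel (S := ℂ) (Rel.cross11 (q:=q) (m:=2) h01)
  simpa [X, g, map_mul, map_add, map_smul] using this

lemma c12 : X q (1 : Fin 2) 0 1 * X q (0 : Fin 2) 1 1 = X q (0 : Fin 2) 1 1 * X q (1 : Fin 2) 0 1 := by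
  have := RingQuot.mkAlgHom_rel (S := ℂ) (Rel.cross12 (q:=q) (m:=2) h01)
  simpa [X, g, map_mul, map_add, map_smul] using this

lemma c13 : X q (1 : Fin 2) 1 0 * X q (0 : Fin 2) 1 0 = q ^ 2 • (X q (0 : Fin 2) 1 0 * X q (1 : Fin 2) 1 0) := by
  have := RingQuot.mkAlgHom_rel (S := ℂ) (Rel.cross13 (q:=q) (m:=2) h01)
  simpa [X, g, map_mul, map_add, map_smul] using this

lemma c14 : X q (1 : Fin 2) 1 1 * X q (0 : Fin 2) 1 0 = X q (0 : Fin 2) 1 0 * X q (1 : Fin 2) 1 1 := by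
  have := RingQuot.mkAlgHom_rel (S := ℂ) (Rel.cross14 (q:=q) (m:=2) h01)
  simpa [X, g, map_mul, map_add, map_smul] using this

lemma c15 : X q (1 : Fin 2) 1 0 * X q (0 : Fin 2) 1 1 = X q (0 : Fin 2) 1 1 * X q (1 : Fin 2) 1 0 + (q ^ 2 - 1) • (X q (0 : Fin 2) 1 0 * X q (1 : Fin 2) 1 1) + (1 - q ^ 2) • (X q (0 : Fin 2) 1 0 * X q (1 : Fin 2) 0 0) := by
  have := RingQuot.mkAlgHom_rel (S := ℂ) (Rel.cross15 (q:=q) (m:=2) h01)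
  simpa [X, g, map_mul, map_add, map_smul] using this

lemma c16 : X q (1 : Fin 2) 1 1 * X q (0 : Fin 2) 1 1 = X q (0 : Fin 2) 1 1 * X q (1 : Fin 2) 1 1 + (1 - q ^ 2) • (X q (0 : Fin 2) 1 0 * X q (1 : Fin 2) 0 1) := by
  have := RingQuot.mkAlgHom_rel (S := ℂ) (Rel.cross16 (q:=q) (m:=2) h01)
  simpa [X, g, map_mul, map_add, map_smul] using this

end QTR

/-- the bilinear quantum Cayley–Hamilton identity
`XY + q²·YX − q·Tr_q(X)·Y − q·Tr_q(Y)·X + (Tr_q(X)·Tr_q(Y) − q⁻¹·Tr_q(XY))·I = 0`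
holds in `M_2(A_q(2,2))`. -/
theorem bilinear_quantum_cayley_hamilton (q : ℂ) (hq : q ≠ 0) :
    QTR.XM q (0 : Fin 2) * QTR.XM q 1 + (q ^ 2 : ℂ) • (QTR.XM q (1 : Fin 2) * QTR.XM q 0)
      - (q • QTR.trq q (QTR.XM q (0 : Fin 2))) • QTR.XM q 1
      - (q • QTR.trq q (QTR.XM q (1 : Fin 2))) • QTR.XM q 0
      + (QTR.trq q (QTR.XM q (0 : Fin 2)) * QTR.trq q (QTR.XM q 1)
          - q⁻¹ • QTR.trq q (QTR.XM q (0 : Fin 2) * QTR.XM q 1)) •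
          (1 : Matrix (Fin 2) (Fin 2) (QTR.A q 2)) = 0 := by
  ext i j
  fin_cases i <;> fin_cases j <;>
  · simp only [QTR.XM, QTR.trq, Matrix.add_apply, Matrix.sub_apply, Matrix.smul_apply,
      Matrix.mul_apply, Matrix.one_apply, Matrix.zero_apply, Fin.sum_univ_two, Matrix.of_apply,
      Fin.isValue, Fin.mk_zero, Fin.mk_one, if_true, if_false, eq_self_iff_true, smul_eq_mul,
      mul_one, Fin.zero_eta, Fin.one_eq_zero_iff, Fin.zero_eq_one_iff, Nat.succ_ne_self,
      ite_false, ite_true, one_ne_zero, zero_ne_one, mul_zero]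
    simp only [mul_add, add_mul, mul_sub, sub_mul, smul_mul_assoc, mul_smul_comm, smul_add,
      smul_sub, smul_smul, mul_one]
    simp only [QTR.c1 q, QTR.c2 q, QTR.c3 q, QTR.c4 q, QTR.c5 q, QTR.c6 q, QTR.c7 q, QTR.c8 q,
      QTR.c9 q, QTR.c10 q, QTR.c11 q, QTR.c12 q, QTR.c13 q, QTR.c14 q, QTR.c15 q, QTR.c16 q]
    simp only [mul_add, add_mul, mul_sub, sub_mul, smul_mul_assoc, mul_smul_comm, smul_add,
      smul_sub, smul_smul, mul_one]
    match_scalars <;> (field_simp; try ring) <;>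
      simp [← mul_pow, mul_inv_cancel₀ hq, mul_inv_cancel₀ (pow_ne_zero 12 hq)]
end
end

section
/- In A_q(2,2) the identity q²·Tr_q(YX) − q^{-2}·Tr_q(XY) = (q − q^{-1})·Tr_q(X)·Tr_q(Y) holds. -/
noncomputable section
open scoped BigOperators

/-- in `A_q(2,2)` one has
`q²·Tr_q(YX) − q⁻²·Tr_q(XY) = (q − q⁻¹)·Tr_q(X)·Tr_q(Y)`. -/
theorem qtrace_yx_xy_identity (q : ℂ) (hq : q ≠ 0) :
    (q ^ 2 : ℂ) • QTR.trq q (QTR.XM q (1 : Fin 2) * QTR.XM q 0)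
      - q⁻¹ ^ 2 • QTR.trq q (QTR.XM q (0 : Fin 2) * QTR.XM q 1)
      = (q - q⁻¹) • (QTR.trq q (QTR.XM q (0 : Fin 2)) * QTR.trq q (QTR.XM q 1)) := by

  have h01 : (0 : Fin 2) < 1 := by decide
  have h1 := RingQuot.mkAlgHom_rel ℂ (QTR.Rel.cross1 (q := q) (m := 2) h01)
  have h7 := RingQuot.mkAlgHom_rel ℂ (QTR.Rel.cross7 (q := q) (m := 2) h01)
  have h10 := RingQuot.mkAlgHom_rel ℂ (QTR.Rel.cross10 (q := q) (m := 2) h01)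
  have h16 := RingQuot.mkAlgHom_rel ℂ (QTR.Rel.cross16 (q := q) (m := 2) h01)
  simp only [map_mul, map_add, map_smul] at h1 h7 h10 h16
  simp only [QTR.trq, QTR.XM, QTR.X, Matrix.mul_apply, Fin.sum_univ_two, Matrix.of_apply]
  rw [smul_add, smul_add, h1, h7, h10, h16]
  have hr : q⁻¹ * q = 1 := inv_mul_cancel₀ hq
  simp only [add_mul, mul_add, smul_mul_assoc, mul_smul_comm]
  match_scalars <;> field_simp <;> (try ring) <;> (rw [← mul_pow, mul_inv_cancel₀ hq]; norm_num)
end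
end

section
/- In A_q(2,3) the identity Tr_q(X)·Tr_q(Y)·Tr_q(Z) − q^{-1}·Tr_q(XY)·Tr_q(Z) − q·Tr_q(X)·Tr_q(YZ) − q·Tr_q(Y)·Tr_q(XZ) + q²·Tr_q(YXZ) + Tr_q(XYZ) = 0 holds. -/
noncomputable section
open scoped BigOperators

set_option maxHeartbeats 40000000 in
/-- in `A_q(2,3)` (with `X = X(1)`, `Y = X(2)`, `Z = X(3)`) one has
`Tr_q(X)Tr_q(Y)Tr_q(Z) − q⁻¹Tr_q(XY)Tr_q(Z) − q·Tr_q(X)Tr_q(YZ) − q·Tr_q(Y)Tr_q(XZ)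
  + q²Tr_q(YXZ) + Tr_q(XYZ) = 0`. -/
theorem fundamental_qtrace_identity_one (q : ℂ) (hq : q ≠ 0) :
    QTR.trq q (QTR.XM q (0 : Fin 3)) * QTR.trq q (QTR.XM q (1 : Fin 3))
        * QTR.trq q (QTR.XM q (2 : Fin 3))
      - q⁻¹ • (QTR.trq q (QTR.XM q (0 : Fin 3) * QTR.XM q 1) * QTR.trq q (QTR.XM q (2 : Fin 3)))
      - q • (QTR.trq q (QTR.XM q (0 : Fin 3)) * QTR.trq q (QTR.XM q (1 : Fin 3) * QTR.XM q 2))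
      - q • (QTR.trq q (QTR.XM q (1 : Fin 3)) * QTR.trq q (QTR.XM q (0 : Fin 3) * QTR.XM q 2))
      + (q ^ 2 : ℂ) • QTR.trq q (QTR.XM q (1 : Fin 3) * QTR.XM q 0 * QTR.XM q 2)
      + QTR.trq q (QTR.XM q (0 : Fin 3) * QTR.XM q 1 * QTR.XM q 2) = 0 := by
  have h01 : (0 : Fin 3) < 1 := by decide
  have c1 := RingQuot.mkAlgHom_rel ℂ (QTR.Rel.cross1 (q:=q) h01)
  have c2 := RingQuot.mkAlgHom_rel ℂ (QTR.Rel.cross2 (q:=q) h01)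
  have c3 := RingQuot.mkAlgHom_rel ℂ (QTR.Rel.cross3 (q:=q) h01)
  have c4 := RingQuot.mkAlgHom_rel ℂ (QTR.Rel.cross4 (q:=q) h01)
  have c5 := RingQuot.mkAlgHom_rel ℂ (QTR.Rel.cross5 (q:=q) h01)
  have c6 := RingQuot.mkAlgHom_rel ℂ (QTR.Rel.cross6 (q:=q) h01)
  have c7 := RingQuot.mkAlgHom_rel ℂ (QTR.Rel.cross7 (q:=q) h01)
  have c8 := RingQuot.mkAlgHom_rel ℂ (QTR.Rel.cross8 (q:=q) h01)
  have c9 := RingQuot.mkAlgHom_rel ℂ (QTR.Rel.cross9 (q:=q) h01)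
  have c10 := RingQuot.mkAlgHom_rel ℂ (QTR.Rel.cross10 (q:=q) h01)
  have c11 := RingQuot.mkAlgHom_rel ℂ (QTR.Rel.cross11 (q:=q) h01)
  have c12 := RingQuot.mkAlgHom_rel ℂ (QTR.Rel.cross12 (q:=q) h01)
  have c13 := RingQuot.mkAlgHom_rel ℂ (QTR.Rel.cross13 (q:=q) h01)
  have c14 := RingQuot.mkAlgHom_rel ℂ (QTR.Rel.cross14 (q:=q) h01)
  have c15 := RingQuot.mkAlgHom_rel ℂ (QTR.Rel.cross15 (q:=q) h01)
  have c16 := RingQuot.mkAlgHom_rel ℂ (QTR.Rel.cross16 (q:=q) h01)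
  simp only [map_mul, map_add, map_smul, map_sub] at c1 c2 c3 c4 c5 c6 c7 c8 c9 c10 c11 c12 c13 c14 c15 c16
  simp only [QTR.trq, QTR.XM, QTR.X, Matrix.mul_apply, Fin.sum_univ_two, Matrix.of_apply]
  simp only [mul_add, add_mul, smul_mul_assoc, mul_smul_comm, smul_smul, smul_add, smul_sub,
    sub_mul, mul_sub, ← mul_assoc]
  simp only [c1, c2, c3, c4, c5, c6, c7, c8, c9, c10, c11, c12, c13, c14, c15, c16]
  simp only [mul_add, add_mul, smul_mul_assoc, mul_smul_comm, smul_smul, smul_add, smul_sub,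
    sub_mul, mul_sub, mul_assoc]
  match_scalars
  all_goals field_simp
  all_goals try ring
  all_goals field_simp
  all_goals try ring
end
end

section
/- In A_q(2,3) the identity Tr_q(X)·Tr_q(Y)·Tr_q(Z) − q·Tr_q(XY)·Tr_q(Z) − q^{-1}·Tr_q(X)·Tr_q(YZ) − q·Tr_q(XZ)·Tr_q(Y) + q²·Tr_q(XZY) + Tr_q(XYZ) = 0 holds. -/
noncomputable section
open scoped BigOperators

namespace QTRproof
variable (q : ℂ)

theorem c1 : QTR.X q (2:Fin 3) 0 0 * QTR.X q 1 0 0 = QTR.X q 1 0 0 * QTR.X q (2:Fin 3) 0 0 + (q⁻¹ ^ 4 - q⁻¹ ^ 2) • (QTR.X q 1 1 0 * QTR.X q (2:Fin 3) 0 1) := by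
  have := RingQuot.mkAlgHom_rel ℂ (QTR.Rel.cross1 (q := q) (m := 3) (k := 1) (l := 2) (by decide))
  simpa [QTR.X, map_mul, map_add, map_smul] using this

theorem c2 : QTR.X q (2:Fin 3) 0 1 * QTR.X q 1 0 0 = QTR.X q 1 0 0 * QTR.X q (2:Fin 3) 0 1 := by
  have := RingQuot.mkAlgHom_rel ℂ (QTR.Rel.cross2 (q := q) (m := 3) (k := 1) (l := 2) (by decide))
  simpa [QTR.X, map_mul, map_add, map_smul] using this

theorem c3 : QTR.X q (2:Fin 3) 0 0 * QTR.X q 1 0 1 = QTR.X q 1 0 1 * QTR.X q (2:Fin 3) 0 0 + (1 - q⁻¹ ^ 2) • (QTR.X q 1 0 0 * QTR.X q (2:Fin 3) 0 1) + (q⁻¹ ^ 2 - 1) • (QTR.X q 1 1 1 * QTR.X q (2:Fin 3) 0 1) := by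
  have := RingQuot.mkAlgHom_rel ℂ (QTR.Rel.cross3 (q := q) (m := 3) (k := 1) (l := 2) (by decide))
  simpa [QTR.X, map_mul, map_add, map_smul] using this

theorem c4 : QTR.X q (2:Fin 3) 0 1 * QTR.X q 1 0 1 = q ^ 2 • (QTR.X q 1 0 1 * QTR.X q (2:Fin 3) 0 1) := by
  have := RingQuot.mkAlgHom_rel ℂ (QTR.Rel.cross4 (q := q) (m := 3) (k := 1) (l := 2) (by decide))
  simpa [QTR.X, map_mul, map_add, map_smul] using this

theorem c5 : QTR.X q (2:Fin 3) 1 0 * QTR.X q 1 0 0 = QTR.X q 1 0 0 * QTR.X q (2:Fin 3) 1 0 + (q⁻¹ ^ 2 - 1) • (QTR.X q 1 1 0 * QTR.X q (2:Fin 3) 1 1) + (1 - q⁻¹ ^ 2) • (QTR.X q 1 1 0 * QTR.X q (2:Fin 3) 0 0) := by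
  have := RingQuot.mkAlgHom_rel ℂ (QTR.Rel.cross5 (q := q) (m := 3) (k := 1) (l := 2) (by decide))
  simpa [QTR.X, map_mul, map_add, map_smul] using this

theorem c6 : QTR.X q (2:Fin 3) 1 1 * QTR.X q 1 0 0 = QTR.X q 1 0 0 * QTR.X q (2:Fin 3) 1 1 + (1 - q⁻¹ ^ 2) • (QTR.X q 1 1 0 * QTR.X q (2:Fin 3) 0 1) := by
  have := RingQuot.mkAlgHom_rel ℂ (QTR.Rel.cross6 (q := q) (m := 3) (k := 1) (l := 2) (by decide))
  simpa [QTR.X, map_mul, map_add, map_smul] using this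

theorem c7 : QTR.X q (2:Fin 3) 1 0 * QTR.X q 1 0 1 = q⁻¹ ^ 2 • (QTR.X q 1 0 1 * QTR.X q (2:Fin 3) 1 0) + (q⁻¹ ^ 2 - 1) • (QTR.X q 1 0 0 * QTR.X q (2:Fin 3) 0 0) + (1 - q⁻¹ ^ 2) • (QTR.X q 1 0 0 * QTR.X q (2:Fin 3) 1 1) + (1 - q⁻¹ ^ 2) • (QTR.X q 1 1 1 * QTR.X q (2:Fin 3) 0 0) + (q⁻¹ ^ 2 - 1) • (QTR.X q 1 1 1 * QTR.X q (2:Fin 3) 1 1) + (q⁻¹ ^ 4 - q⁻¹ ^ 2 - 1 + q ^ 2) • (QTR.X q 1 1 0 * QTR.X q (2:Fin 3) 0 1) := by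
  have := RingQuot.mkAlgHom_rel ℂ (QTR.Rel.cross7 (q := q) (m := 3) (k := 1) (l := 2) (by decide))
  simpa [QTR.X, map_mul, map_add, map_smul] using this

theorem c8 : QTR.X q (2:Fin 3) 1 1 * QTR.X q 1 0 1 = QTR.X q 1 0 1 * QTR.X q (2:Fin 3) 1 1 + (1 - q ^ 2) • (QTR.X q 1 0 0 * QTR.X q (2:Fin 3) 0 1) + (q ^ 2 - 1) • (QTR.X q 1 1 1 * QTR.X q (2:Fin 3) 0 1) := by
  have := RingQuot.mkAlgHom_rel ℂ (QTR.Rel.cross8 (q := q) (m := 3) (k := 1) (l := 2) (by decide))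
  simpa [QTR.X, map_mul, map_add, map_smul] using this

theorem c9 : QTR.X q (2:Fin 3) 0 0 * QTR.X q 1 1 0 = QTR.X q 1 1 0 * QTR.X q (2:Fin 3) 0 0 := by
  have := RingQuot.mkAlgHom_rel ℂ (QTR.Rel.cross9 (q := q) (m := 3) (k := 1) (l := 2) (by decide))
  simpa [QTR.X, map_mul, map_add, map_smul] using this

theorem c10 : QTR.X q (2:Fin 3) 0 1 * QTR.X q 1 1 0 = q⁻¹ ^ 2 • (QTR.X q 1 1 0 * QTR.X q (2:Fin 3) 0 1) := by
  have := RingQuot.mkAlgHom_rel ℂ (QTR.Rel.cross10 (q := q) (m := 3) (k := 1) (l := 2) (by decide))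
  simpa [QTR.X, map_mul, map_add, map_smul] using this

theorem c11 : QTR.X q (2:Fin 3) 0 0 * QTR.X q 1 1 1 = QTR.X q 1 1 1 * QTR.X q (2:Fin 3) 0 0 + (1 - q⁻¹ ^ 2) • (QTR.X q 1 1 0 * QTR.X q (2:Fin 3) 0 1) := by
  have := RingQuot.mkAlgHom_rel ℂ (QTR.Rel.cross11 (q := q) (m := 3) (k := 1) (l := 2) (by decide))
  simpa [QTR.X, map_mul, map_add, map_smul] using this

theorem c12 : QTR.X q (2:Fin 3) 0 1 * QTR.X q 1 1 1 = QTR.X q 1 1 1 * QTR.X q (2:Fin 3) 0 1 := by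
  have := RingQuot.mkAlgHom_rel ℂ (QTR.Rel.cross12 (q := q) (m := 3) (k := 1) (l := 2) (by decide))
  simpa [QTR.X, map_mul, map_add, map_smul] using this

theorem c13 : QTR.X q (2:Fin 3) 1 0 * QTR.X q 1 1 0 = q ^ 2 • (QTR.X q 1 1 0 * QTR.X q (2:Fin 3) 1 0) := by
  have := RingQuot.mkAlgHom_rel ℂ (QTR.Rel.cross13 (q := q) (m := 3) (k := 1) (l := 2) (by decide))
  simpa [QTR.X, map_mul, map_add, map_smul] using this

theorem c14 : QTR.X q (2:Fin 3) 1 1 * QTR.X q 1 1 0 = QTR.X q 1 1 0 * QTR.X q (2:Fin 3) 1 1 := by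
  have := RingQuot.mkAlgHom_rel ℂ (QTR.Rel.cross14 (q := q) (m := 3) (k := 1) (l := 2) (by decide))
  simpa [QTR.X, map_mul, map_add, map_smul] using this

theorem c15 : QTR.X q (2:Fin 3) 1 0 * QTR.X q 1 1 1 = QTR.X q 1 1 1 * QTR.X q (2:Fin 3) 1 0 + (q ^ 2 - 1) • (QTR.X q 1 1 0 * QTR.X q (2:Fin 3) 1 1) + (1 - q ^ 2) • (QTR.X q 1 1 0 * QTR.X q (2:Fin 3) 0 0) := by
  have := RingQuot.mkAlgHom_rel ℂ (QTR.Rel.cross15 (q := q) (m := 3) (k := 1) (l := 2) (by decide))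
  simpa [QTR.X, map_mul, map_add, map_smul] using this

theorem c16 : QTR.X q (2:Fin 3) 1 1 * QTR.X q 1 1 1 = QTR.X q 1 1 1 * QTR.X q (2:Fin 3) 1 1 + (1 - q ^ 2) • (QTR.X q 1 1 0 * QTR.X q (2:Fin 3) 0 1) := by
  have := RingQuot.mkAlgHom_rel ℂ (QTR.Rel.cross16 (q := q) (m := 3) (k := 1) (l := 2) (by decide))
  simpa [QTR.X, map_mul, map_add, map_smul] using this


end QTRproof

set_option maxHeartbeats 4000000 in
/-- in `A_q(2,3)` (with `X = X(1)`, `Y = X(2)`, `Z = X(3)`) one has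
`Tr_q(X)Tr_q(Y)Tr_q(Z) − q·Tr_q(XY)Tr_q(Z) − q⁻¹Tr_q(X)Tr_q(YZ) − q·Tr_q(XZ)Tr_q(Y)
  + q²Tr_q(XZY) + Tr_q(XYZ) = 0`. -/
theorem fundamental_qtrace_identity_two (q : ℂ) (hq : q ≠ 0) :
    QTR.trq q (QTR.XM q (0 : Fin 3)) * QTR.trq q (QTR.XM q (1 : Fin 3))
        * QTR.trq q (QTR.XM q (2 : Fin 3))
      - q • (QTR.trq q (QTR.XM q (0 : Fin 3) * QTR.XM q 1) * QTR.trq q (QTR.XM q (2 : Fin 3)))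
      - q⁻¹ • (QTR.trq q (QTR.XM q (0 : Fin 3)) * QTR.trq q (QTR.XM q (1 : Fin 3) * QTR.XM q 2))
      - q • (QTR.trq q (QTR.XM q (0 : Fin 3) * QTR.XM q 2) * QTR.trq q (QTR.XM q (1 : Fin 3)))
      + (q ^ 2 : ℂ) • QTR.trq q (QTR.XM q (0 : Fin 3) * QTR.XM q 2 * QTR.XM q 1)
      + QTR.trq q (QTR.XM q (0 : Fin 3) * QTR.XM q 1 * QTR.XM q 2) = 0 := by
  have e1 := QTRproof.c1 q; have e2 := QTRproof.c2 q; have e3 := QTRproof.c3 q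
  have e4 := QTRproof.c4 q; have e5 := QTRproof.c5 q; have e6 := QTRproof.c6 q
  have e7 := QTRproof.c7 q; have e8 := QTRproof.c8 q; have e9 := QTRproof.c9 q
  have e10 := QTRproof.c10 q; have e11 := QTRproof.c11 q; have e12 := QTRproof.c12 q
  have e13 := QTRproof.c13 q; have e14 := QTRproof.c14 q; have e15 := QTRproof.c15 q
  have e16 := QTRproof.c16 q
  simp only [QTR.trq, QTR.XM, Matrix.mul_apply, Fin.sum_univ_two, Matrix.of_apply,
    mul_add, add_mul, smul_mul_assoc, mul_smul_comm, smul_smul, smul_add, mul_assoc,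
    e1, e2, e3, e4, e5, e6, e7, e8, e9, e10, e11, e12, e13, e14, e15, e16]
  match_scalars <;> (try field_simp) <;> (try ring1) <;> (try ring_nf) <;> (try field_simp) <;>
    (try ring1)
end
end
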